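/- arXiv:1801.07780 — 3 statements merged into one kernel-verified Lean document; each statement's English description precedes it below -/
import Mathlib

section
/- If each function f_t : ℝ^n → ℝ (t = 1,…,T) is α-strongly convex and l-smooth, then the total cost function C(x₁,…,x_T) = Σ_{t=1}^T ( f_t(x_t) + (β/2)‖x_t − x_{t−1}‖² ) (with x₀ fixed) is α-strongly convex and (l + 4β)-smooth as a function of (x₁,…,x_T) ∈ ℝ^{nT}. -/
/-!
Write `C x = ∑ₜ fₜ (xₜ) + (β/2) ‖A x - b‖²` with `A = id - S`, where `S` is the shift
`(x₁, …, x_T) ↦ (0, x₁, …, x_{T-1})` and `b = (x₀, 0, …, 0)`. The Bregman divergence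
`C y - C x - ⟪∇C x, y - x⟫` is then the sum of the Bregman divergences of the `fₜ`, which lies
between `(α/2) ‖y - x‖²` and `(l/2) ‖y - x‖²`, plus exactly `(β/2) ‖A (y - x)‖²`, which lies
between `0` and `2β ‖y - x‖²` because `‖S‖ ≤ 1` gives `‖A‖ ≤ 2`.
-/

open Finset InnerProductSpace

noncomputable section

section Bregman

variable {F : Type*} [NormedAddCommGroup F] [InnerProductSpace ℝ F]

def bregmanDiv (f : F → ℝ) (g x y : F) : ℝ :=
  f y - f x - ⟪g, y - x⟫_ℝ

theorem le_bregmanDiv_iff {f : F → ℝ} {g x y : F} {c : ℝ} :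
    c ≤ bregmanDiv f g x y ↔ f x + ⟪g, y - x⟫_ℝ + c ≤ f y := by
  rw [bregmanDiv]
  constructor <;> intro h <;> linarith

theorem bregmanDiv_le_iff {f : F → ℝ} {g x y : F} {c : ℝ} :
    bregmanDiv f g x y ≤ c ↔ f y ≤ f x + ⟪g, y - x⟫_ℝ + c := by
  rw [bregmanDiv]
  constructor <;> intro h <;> linarith

theorem bregmanDiv_add (f₁ f₂ : F → ℝ) (g₁ g₂ x y : F) :
    bregmanDiv (fun z => f₁ z + f₂ z) (g₁ + g₂) x y =
      bregmanDiv f₁ g₁ x y + bregmanDiv f₂ g₂ x y := by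
  simp only [bregmanDiv, inner_add_left]
  ring

theorem HasGradientAt.add [CompleteSpace F] {f₁ f₂ : F → ℝ} {g₁ g₂ x : F}
    (h₁ : HasGradientAt f₁ g₁ x) (h₂ : HasGradientAt f₂ g₂ x) :
    HasGradientAt (fun y => f₁ y + f₂ y) (g₁ + g₂) x := by
  rw [hasGradientAt_iff_hasFDerivAt, map_add]
  exact h₁.hasFDerivAt.add h₂.hasFDerivAt

end Bregman

section Separable

variable {ι : Type*} [Fintype ι] {E : ι → Type*} [∀ i, NormedAddCommGroup (E i)]

theorem PiLp.mul_norm_sq_sub_eq_sum (c : ℝ) (x y : PiLp 2 E) :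
    c * ‖y - x‖ ^ 2 = ∑ i, c * ‖y i - x i‖ ^ 2 := by
  simp only [PiLp.norm_sq_eq_of_L2, PiLp.sub_apply, mul_sum]

variable [∀ i, InnerProductSpace ℝ (E i)]

theorem hasGradientAt_piLp_sum [∀ i, CompleteSpace (E i)] {f : ∀ i, E i → ℝ} {g : ∀ i, E i}
    {x : PiLp 2 E} (hf : ∀ i, HasGradientAt (f i) (g i) (x i)) :
    HasGradientAt (fun y : PiLp 2 E => ∑ i, f i (y i)) (WithLp.toLp 2 g) x := by
  rw [hasGradientAt_iff_hasFDerivAt]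
  have hcomp : ∀ i ∈ univ, HasFDerivAt (fun y : PiLp 2 E => f i (y i))
      ((toDual ℝ (E i) (g i)).comp (PiLp.proj 2 E i)) x :=
    fun i _ => (hf i).hasFDerivAt.comp x (PiLp.proj 2 E i).hasFDerivAt
  refine (HasFDerivAt.fun_sum hcomp).congr_fderiv ?_
  ext d
  simp [PiLp.inner_apply]

theorem bregmanDiv_piLp_sum (f : ∀ i, E i → ℝ) (g : ∀ i, E i) (x y : PiLp 2 E) :
    bregmanDiv (fun z : PiLp 2 E => ∑ i, f i (z i)) (WithLp.toLp 2 g) x y =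
      ∑ i, bregmanDiv (f i) (g i) (x i) (y i) := by
  simp only [bregmanDiv, PiLp.inner_apply, PiLp.sub_apply, sum_sub_distrib]

end Separable

section Quadratic

variable {F G : Type*} [NormedAddCommGroup F] [InnerProductSpace ℝ F] [CompleteSpace F]
  [NormedAddCommGroup G] [InnerProductSpace ℝ G] [CompleteSpace G]

theorem hasGradientAt_half_mul_norm_sq_sub (A : F →L[ℝ] G) (b : G) (β : ℝ) (x : F) :
    HasGradientAt (fun y => β / 2 * ‖A y - b‖ ^ 2)
      (β • ContinuousLinearMap.adjoint A (A x - b)) x := by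
  rw [hasGradientAt_iff_hasFDerivAt]
  refine (((A.hasFDerivAt.sub_const b).norm_sq).const_mul (β / 2)).congr_fderiv ?_
  ext d
  simp [ContinuousLinearMap.adjoint_inner_left]
  ring

theorem bregmanDiv_half_mul_norm_sq_sub (A : F →L[ℝ] G) (b : G) (β : ℝ) (x y : F) :
    bregmanDiv (fun z => β / 2 * ‖A z - b‖ ^ 2)
      (β • ContinuousLinearMap.adjoint A (A x - b)) x y = β / 2 * ‖A (y - x)‖ ^ 2 := by
  have hsplit : A y - b = (A x - b) + A (y - x) := by
    rw [map_sub]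
    abel
  simp only [bregmanDiv, hsplit, norm_add_sq_real, real_inner_smul_left,
    ContinuousLinearMap.adjoint_inner_left]
  ring

end Quadratic

section Shift

variable {E : Type*} [NormedAddCommGroup E] [NormedSpace ℝ E] {T : ℕ}

def shiftRightₗ : PiLp 2 (fun _ : Fin T => E) →ₗ[ℝ] PiLp 2 (fun _ : Fin T => E) where
  toFun x := WithLp.toLp 2 fun t => if h : (t : ℕ) = 0 then 0 else x ⟨t - 1, by omega⟩
  map_add' x y := by
    ext t
    by_cases h : (t : ℕ) = 0 <;> simp [h]
  map_smul' c x := by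
    ext t
    by_cases h : (t : ℕ) = 0 <;> simp [h]

theorem norm_shiftRightₗ_le (x : PiLp 2 (fun _ : Fin T => E)) : ‖shiftRightₗ x‖ ≤ ‖x‖ := by
  refine (sq_le_sq₀ (norm_nonneg _) (norm_nonneg _)).1 ?_
  rw [PiLp.norm_sq_eq_of_L2, PiLp.norm_sq_eq_of_L2]
  cases T with
  | zero => simp
  | succ m =>
    calc ∑ t, ‖shiftRightₗ x t‖ ^ 2 = ∑ i : Fin m, ‖x i.castSucc‖ ^ 2 := by
          simp [Fin.sum_univ_succ, shiftRightₗ]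
          rfl
      _ ≤ ∑ t, ‖x t‖ ^ 2 := by
          rw [Fin.sum_univ_castSucc]
          exact le_add_of_nonneg_right (sq_nonneg _)

def shiftRight : PiLp 2 (fun _ : Fin T => E) →L[ℝ] PiLp 2 (fun _ : Fin T => E) :=
  shiftRightₗ.mkContinuous 1 fun x => by simpa using norm_shiftRightₗ_le x

theorem norm_sub_shiftRight_le (x : PiLp 2 (fun _ : Fin T => E)) :
    ‖x - shiftRight x‖ ≤ 2 * ‖x‖ := by
  have : ‖shiftRight x‖ ≤ ‖x‖ := norm_shiftRightₗ_le x
  linarith [norm_sub_le x (shiftRight x)]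

def startVec (x₀ : E) : PiLp 2 (fun _ : Fin T => E) :=
  WithLp.toLp 2 fun t => if (t : ℕ) = 0 then x₀ else 0

theorem sub_shiftRight_sub_startVec_apply (x₀ : E) (x : PiLp 2 (fun _ : Fin T => E))
    (t : Fin T) :
    (x - shiftRight x - startVec x₀ : PiLp 2 (fun _ : Fin T => E)) t =
      x t - if _ : (t : ℕ) = 0 then x₀ else x ⟨t - 1, by omega⟩ := by
  by_cases h : (t : ℕ) = 0 <;> simp [shiftRight, shiftRightₗ, startVec, h]

end Shift

end

/-- If each `f t` is `α`-strongly convex and `l`-smooth (stated via its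
gradient `gf t`), then the total cost
`C x = ∑ t, (f t (x t) + (β/2) * ‖x t - x_{t-1}‖²)` (with `x₀` fixed) is
`α`-strongly convex and `(l + 4β)`-smooth on `(ℝⁿ)ᵀ`. -/
theorem total_cost_strongly_convex_and_smooth
    (n T : ℕ) (α l β : ℝ) (hβ : 0 ≤ β)
    (f : Fin T → EuclideanSpace ℝ (Fin n) → ℝ)
    (gf : Fin T → EuclideanSpace ℝ (Fin n) → EuclideanSpace ℝ (Fin n))
    (hgf : ∀ t x, HasGradientAt (f t) (gf t x) x)
    (hsc : ∀ t (x y : EuclideanSpace ℝ (Fin n)),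
      f t y ≥ f t x + ⟪gf t x, y - x⟫_ℝ + α / 2 * ‖y - x‖ ^ 2)
    (hsm : ∀ t (x y : EuclideanSpace ℝ (Fin n)),
      f t y ≤ f t x + ⟪gf t x, y - x⟫_ℝ + l / 2 * ‖y - x‖ ^ 2)
    (x₀ : EuclideanSpace ℝ (Fin n))
    (C : PiLp 2 (fun _ : Fin T => EuclideanSpace ℝ (Fin n)) → ℝ)
    (hC : ∀ x, C x = ∑ t : Fin T,
      (f t (x t) + β / 2 *
        ‖x t - (if h : (t : ℕ) = 0 then x₀
                else x ⟨(t : ℕ) - 1, lt_of_le_of_lt (Nat.sub_le _ _) t.isLt⟩)‖ ^ 2)) :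
    ∃ gC : PiLp 2 (fun _ : Fin T => EuclideanSpace ℝ (Fin n)) →
           PiLp 2 (fun _ : Fin T => EuclideanSpace ℝ (Fin n)),
      (∀ x, HasGradientAt C (gC x) x) ∧
      (∀ x y, C y ≥ C x + ⟪gC x, y - x⟫_ℝ + α / 2 * ‖y - x‖ ^ 2) ∧
      (∀ x y, C y ≤ C x + ⟪gC x, y - x⟫_ℝ + (l + 4 * β) / 2 * ‖y - x‖ ^ 2) := by
  set A : PiLp 2 (fun _ : Fin T => EuclideanSpace ℝ (Fin n)) →L[ℝ] _ :=
    ContinuousLinearMap.id ℝ _ - shiftRight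
  have hC_eq : C = fun x => ∑ t, f t (x t) + β / 2 * ‖A x - startVec x₀‖ ^ 2 := by
    funext x
    rw [hC, sum_add_distrib, ← mul_sum, PiLp.norm_sq_eq_of_L2]
    simp only [A, sub_apply, ContinuousLinearMap.id_apply, sub_shiftRight_sub_startVec_apply]
  set gC : PiLp 2 (fun _ : Fin T => EuclideanSpace ℝ (Fin n)) → _ := fun x =>
    WithLp.toLp 2 (fun t => gf t (x t)) + β • ContinuousLinearMap.adjoint A (A x - startVec x₀)
  have hdiv : ∀ x y, bregmanDiv C (gC x) x y =
      ∑ t, bregmanDiv (f t) (gf t (x t)) (x t) (y t) + β / 2 * ‖A (y - x)‖ ^ 2 := fun x y => by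
    rw [hC_eq, ← bregmanDiv_piLp_sum, ← bregmanDiv_half_mul_norm_sq_sub A _ β x y]
    exact bregmanDiv_add _ _ _ _ x y
  refine ⟨gC, fun x => ?_, fun x y => ?_, fun x y => ?_⟩
  · rw [hC_eq]
    exact (hasGradientAt_piLp_sum fun t => hgf t (x t)).add
      (hasGradientAt_half_mul_norm_sq_sub A _ β x)
  · refine le_bregmanDiv_iff.1 ?_
    rw [hdiv, PiLp.mul_norm_sq_sub_eq_sum]
    exact le_add_of_le_of_nonneg (sum_le_sum fun t _ => le_bregmanDiv_iff.2 (hsc t _ _))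
      (by positivity)
  · refine bregmanDiv_le_iff.1 ?_
    calc bregmanDiv C (gC x) x y
        ≤ l / 2 * ‖y - x‖ ^ 2 + β / 2 * (2 * ‖y - x‖) ^ 2 := by
          rw [hdiv, PiLp.mul_norm_sq_sub_eq_sum]
          gcongr with t
          exacts [bregmanDiv_le_iff.2 (hsm t _ _), norm_sub_shiftRight_le _]
      _ = (l + 4 * β) / 2 * ‖y - x‖ ^ 2 := by ring
end

section
/- Let (x_t)_{t=1}^T and (θ_t)_{t=1}^T be sequences in ℝ^n with x₁ = θ₀ (a given point) and suppose ‖x_{t+1} − θ_t‖ ≤ κ‖x_t − θ_t‖ for all 1 ≤ t ≤ T−1, where 0 ≤ κ < 1. Then Σ_{t=1}^T ‖x_t − θ_t‖ ≤ (1/(1−κ)) Σ_{t=1}^T ‖θ_t − θ_{t−1}‖. -/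
open Finset

/-!
With `a t = ‖x t - θ t‖` and `p t = ‖θ t - θ (t - 1)‖`, the triangle inequality through `θ t`
turns the contraction hypothesis into `a (t + 1) ≤ κ a t + p (t + 1)`, and `x 1 = θ 0` gives
`a 1 = p 1`. Summing, `∑ a ≤ ∑ p + κ ∑ a`, which rearranges to the claim since `κ < 1`.
-/

section RecursiveBound

variable {a p : ℕ → ℝ} {κ : ℝ} {T : ℕ}

theorem sum_Icc_le_sum_Icc_add_mul_sum_Ico (h1 : a 1 ≤ p 1)
    (hstep : ∀ t ∈ Ico 1 T, a (t + 1) ≤ κ * a t + p (t + 1)) :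
    ∑ t ∈ Icc 1 T, a t ≤ ∑ t ∈ Icc 1 T, p t + κ * ∑ t ∈ Ico 1 T, a t := by
  rcases T.eq_zero_or_pos with rfl | hT
  · simp
  have split (f : ℕ → ℝ) : ∑ t ∈ Icc 1 T, f t = f 1 + ∑ t ∈ Ico 1 T, f (t + 1) := by
    rw [← Ico_add_one_right_eq_Icc, sum_eq_sum_Ico_succ_bot (by omega), sum_Ico_add']
  have hsum := sum_le_sum hstep
  rw [sum_add_distrib, ← mul_sum] at hsum
  rw [split a, split p]
  linarith

theorem sum_Icc_le_one_div_one_sub_mul (ha : ∀ t, 0 ≤ a t) (hκ0 : 0 ≤ κ) (hκ1 : κ < 1)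
    (h1 : a 1 ≤ p 1) (hstep : ∀ t ∈ Ico 1 T, a (t + 1) ≤ κ * a t + p (t + 1)) :
    ∑ t ∈ Icc 1 T, a t ≤ (1 / (1 - κ)) * ∑ t ∈ Icc 1 T, p t := by
  have hsum := sum_Icc_le_sum_Icc_add_mul_sum_Ico h1 hstep
  have hmono : ∑ t ∈ Ico 1 T, a t ≤ ∑ t ∈ Icc 1 T, a t :=
    sum_le_sum_of_subset_of_nonneg Ico_subset_Icc_self fun t _ _ => ha t
  rw [one_div_mul_eq_div, le_div_iff₀ (sub_pos.2 hκ1)]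
  nlinarith [mul_le_mul_of_nonneg_left hmono hκ0]

end RecursiveBound

/-- Recursive tracking inequality: if `x₁ = θ₀` and
`‖x_{t+1} − θ_t‖ ≤ κ‖x_t − θ_t‖` for `1 ≤ t ≤ T−1` with `0 ≤ κ < 1`, then
`∑_{t=1}^T ‖x_t − θ_t‖ ≤ (1/(1−κ)) ∑_{t=1}^T ‖θ_t − θ_{t−1}‖`. -/
theorem tracking_error_path_length
    (n T : ℕ) (κ : ℝ) (hκ0 : 0 ≤ κ) (hκ1 : κ < 1)
    (x θ : ℕ → EuclideanSpace ℝ (Fin n))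
    (hinit : x 1 = θ 0)
    (hrec : ∀ t, 1 ≤ t → t ≤ T - 1 → ‖x (t + 1) - θ t‖ ≤ κ * ‖x t - θ t‖) :
    ∑ t ∈ Finset.Icc 1 T, ‖x t - θ t‖ ≤
      (1 / (1 - κ)) * ∑ t ∈ Finset.Icc 1 T, ‖θ t - θ (t - 1)‖ := by
  refine sum_Icc_le_one_div_one_sub_mul (fun t => norm_nonneg _) hκ0 hκ1 ?_ ?_
  · simp [hinit, norm_sub_rev]
  · intro t ht
    rw [mem_Ico] at ht
    calc ‖x (t + 1) - θ (t + 1)‖ ≤ ‖x (t + 1) - θ t‖ + ‖θ t - θ (t + 1)‖ :=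
          norm_sub_le_norm_sub_add_norm_sub _ _ _
      _ ≤ κ * ‖x t - θ t‖ + ‖θ (t + 1) - θ (t + 1 - 1)‖ := by
          rw [Nat.add_sub_cancel, norm_sub_rev (θ t)]
          gcongr
          exact hrec t ht.1 (by omega)
end

section
/- Let T ≥ 2W ≥ 2 be integers, D > 0, and 2D ≤ L ≤ DT. Define Δ = ⌈T/⌊L/D⌋⌉ and let J = {t ∈ ℤ : 1 ≤ t ≤ T − W and t + W ≡ 1 (mod Δ)}. Then |J| ≥ L/(12D). -/
open Finset

/-!
Put `m = ⌊L/D⌋`, so that `2 ≤ m ≤ T` and `L/D < m + 1`, and `N = T - W ≥ T/2`. Every residue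
class mod `Δ` meets `[1, N]` in at least `⌊N/Δ⌋` points. As `T/m ≥ 1`, `Δ = ⌈T/m⌉ ≤ 2T/m`, so
`N/Δ ≥ m/4`; and `Δ ≤ T/2 ≤ N`, so `N/Δ ≥ 1` and `⌊N/Δ⌋ > N/(2Δ) ≥ m/8 ≥ (m + 1)/12 > L/(12D)`.
-/

theorem Int.ediv_le_card_filter_modEq_Ioc {r : ℤ} (hr : 0 < r) (a N v : ℤ) :
    N / r ≤ #{x ∈ Ioc a (a + N) | x ≡ v [ZMOD r]} := by
  have hN : N / r = ⌊(N : ℚ) / r⌋ := by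
    rw [Int.floor_div_cast_of_nonneg hr.le, Int.floor_intCast]
  rw [Int.Ioc_filter_modEq_card _ _ hr, hN]
  refine le_max_of_le_left (le_sub_iff_add_le'.mpr ?_)
  calc ⌊((a : ℚ) - v) / r⌋ + ⌊(N : ℚ) / r⌋ ≤ ⌊((a : ℚ) - v) / r + N / r⌋ := Int.le_floor_add _ _
    _ = ⌊(((a + N : ℤ) : ℚ) - v) / r⌋ := by push_cast; ring_nf

theorem div_eight_lt_ediv_ceil_div {m T : ℝ} {N : ℤ} (hm : 2 ≤ m) (hmT : m ≤ 2 * T)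
    (hTN : T ≤ 2 * N) : m / 8 < ((N / ⌈T / m⌉ : ℤ) : ℝ) := by
  have hm0 : 0 < m := by linarith
  have hΔ_le : (⌈T / m⌉ : ℝ) ≤ 2 * (T / m) :=
    Int.ceil_le_two_mul ((le_div_iff₀ hm0).mpr (by linarith))
  have hΔ_pos : 0 < ⌈T / m⌉ := Int.ceil_pos.mpr (by apply div_pos <;> linarith)
  have hΔ_le_N : ⌈T / m⌉ ≤ N := Int.ceil_le.mpr ((div_le_iff₀ hm0).mpr (by nlinarith))
  have hΔ_pos' : (0 : ℝ) < ⌈T / m⌉ := by exact_mod_cast hΔ_pos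
  have hmN : m / 4 ≤ N / (⌈T / m⌉ : ℝ) := by
    rw [le_div_iff₀ hΔ_pos']
    calc m / 4 * ⌈T / m⌉ ≤ m / 4 * (2 * (T / m)) := by gcongr
      _ = T / 2 := by field_simp; ring
      _ ≤ N := by linarith
  have hfloor : ⌊(N : ℝ) / ⌈T / m⌉⌋ = N / ⌈T / m⌉ := by
    rw [Int.floor_div_cast_of_nonneg hΔ_pos.le, Int.floor_intCast]
  rw [← hfloor]
  calc m / 8 ≤ N / (⌈T / m⌉ : ℝ) / 2 := by linarith
    _ < _ := Int.div_two_lt_floor ((one_le_div hΔ_pos').mpr (by exact_mod_cast hΔ_le_N))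

theorem card_J_ge_with_prediction_general
    (T W : ℕ) (hTW : 2 * W ≤ T)
    (D L : ℝ) (hD : 0 < D) (hL : 2 * D ≤ L) (hLT : L ≤ D * T)
    (Δ : ℤ) (hΔ : Δ = ⌈(T : ℝ) / (⌊L / D⌋ : ℝ)⌉)
    (J : Finset ℤ)
    (hJ : J = (Finset.Icc (1 : ℤ) ((T : ℤ) - (W : ℤ))).filter
      (fun t => (t + (W : ℤ)) ≡ 1 [ZMOD Δ])) :
    (J.card : ℝ) ≥ L / (12 * D) := by
  set m := ⌊L / D⌋
  have hm : (2 : ℝ) ≤ m := by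
    exact_mod_cast Int.le_floor.mpr (by push_cast; exact (le_div_iff₀ hD).mpr (by linarith))
  have hmT : (m : ℝ) ≤ T := (Int.floor_le _).trans ((div_le_iff₀ hD).mpr (by linarith))
  have hΔ_pos : 0 < Δ := hΔ ▸ Int.ceil_pos.mpr (div_pos (by linarith) (by linarith))
  have hJ_card : ((T : ℤ) - W) / Δ ≤ #J := by
    convert Int.ediv_le_card_filter_modEq_Ioc hΔ_pos 0 ((T : ℤ) - W) (1 - W) using 2
    rw [hJ, zero_add, ← Icc_add_one_left_eq_Ioc, zero_add]
    congr 1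
    refine filter_congr fun t _ => ?_
    rw [Int.ModEq, Int.ModEq, ← Int.emod_add_cancel_right (m := t) (W : ℤ), sub_add_cancel]
  have hTW' : (T : ℝ) ≤ 2 * (((T : ℤ) - W : ℤ) : ℝ) := by
    have : (2 * W : ℝ) ≤ T := by exact_mod_cast hTW
    push_cast; linarith
  have hm_lt := div_eight_lt_ediv_ceil_div hm (by linarith) hTW'
  rw [← hΔ] at hm_lt
  calc L / (12 * D) = L / D / 12 := by rw [div_div, mul_comm]
    _ ≤ (m + 1) / 12 := by linarith [Int.lt_floor_add_one (L / D)]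
    _ ≤ m / 8 := by linarith
    _ ≤ #J := hm_lt.le.trans (by exact_mod_cast hJ_card)

/-- For integers `T ≥ 2W ≥ 2`, `D > 0`, `2D ≤ L ≤ DT`, `Δ = ⌈T/⌊L/D⌋⌉` and
`J = {1 ≤ t ≤ T − W : t + W ≡ 1 (mod Δ)}`, we have `|J| ≥ L/(12D)`. -/
theorem card_J_ge_with_prediction
    (T W : ℕ) (hW : 1 ≤ W) (hTW : 2 * W ≤ T)
    (D L : ℝ) (hD : 0 < D) (hL : 2 * D ≤ L) (hLT : L ≤ D * T)
    (Δ : ℤ) (hΔ : Δ = ⌈(T : ℝ) / (⌊L / D⌋ : ℝ)⌉)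
    (J : Finset ℤ)
    (hJ : J = (Finset.Icc (1 : ℤ) ((T : ℤ) - (W : ℤ))).filter
      (fun t => (t + (W : ℤ)) ≡ 1 [ZMOD Δ])) :
    (J.card : ℝ) ≥ L / (12 * D) :=
  card_J_ge_with_prediction_general T W hTW D L hD hL hLT Δ hΔ J hJ
end
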